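/- Let A ∈ S^{3×3} and let f : S^{3×3} → ℝ be the quadratic form f(ε) = −A:cof ε. Then the following three statements are equivalent: (i) f is symmetric polyconvex; (ii) f is symmetric rank-one convex; (iii) A is positive semi-definite. -/
import Mathlib


open Matrix

/-- The symmetric part `(F + Fᵀ)/2` of a 3×3 matrix. -/
noncomputable def symPart (F : Matrix (Fin 3) (Fin 3) ℝ) : Matrix (Fin 3) (Fin 3) ℝ :=
  (1 / 2 : ℝ) • (F + Fᵀ)

/-- The cofactor matrix: `(cof F)_{ij} = (-1)^{i+j}` times the determinant of the 2×2
matrix obtained from `F` by deleting row `i` and column `j`. -/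
noncomputable def cof (F : Matrix (Fin 3) (Fin 3) ℝ) : Matrix (Fin 3) (Fin 3) ℝ :=
  Matrix.of fun i j =>
    (-1 : ℝ) ^ ((i : ℕ) + (j : ℕ)) * (F.submatrix i.succAbove j.succAbove).det

/-- Frobenius inner product `A:B = Σ_{i,j} A_{ij} B_{ij}` of 3×3 matrices. -/
def mdot (A B : Matrix (Fin 3) (Fin 3) ℝ) : ℝ := ∑ i, ∑ j, A i j * B i j

/-- A function `W : ℝ^{3×3} → ℝ` is polyconvex if there is a convex function
`G : ℝ^{3×3} × ℝ^{3×3} × ℝ → ℝ` with `W F = G (F, cof F, det F)` for all `F`. -/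
def Polyconvex3 (W : Matrix (Fin 3) (Fin 3) ℝ → ℝ) : Prop :=
  ∃ G : Matrix (Fin 3) (Fin 3) ℝ × Matrix (Fin 3) (Fin 3) ℝ × ℝ → ℝ,
    ConvexOn ℝ Set.univ G ∧ ∀ F : Matrix (Fin 3) (Fin 3) ℝ, W F = G (F, cof F, F.det)

/-- `f : S^{3×3} → ℝ` is symmetric polyconvex if `F ↦ f (Fˢ)` is polyconvex. -/
def SymPolyconvex3 (f : Matrix (Fin 3) (Fin 3) ℝ → ℝ) : Prop :=
  Polyconvex3 (fun F => f (symPart F))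

/-- `B ∈ S^{3×3}` is negative semi-definite: `Bx·x ≤ 0` for all `x ∈ ℝ³`. -/
def NegSemidefM (B : Matrix (Fin 3) (Fin 3) ℝ) : Prop :=
  ∀ x : Fin 3 → ℝ, B.mulVec x ⬝ᵥ x ≤ 0

/-- `A ∈ S^{3×3}` is positive semi-definite: `Ax·x ≥ 0` for all `x ∈ ℝ³`. -/
def PosSemidefM (A : Matrix (Fin 3) (Fin 3) ℝ) : Prop :=
  ∀ x : Fin 3 → ℝ, 0 ≤ A.mulVec x ⬝ᵥ x

/-- The symmetrized tensor product `a ⊙ b = (a⊗b + b⊗a)/2`. -/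
noncomputable def symProd (a b : Fin 3 → ℝ) : Matrix (Fin 3) (Fin 3) ℝ :=
  (1 / 2 : ℝ) • (vecMulVec a b + vecMulVec b a)

/-- `f : S^{3×3} → ℝ` is symmetric rank-one convex if `t ↦ f (ε + t a⊙b)` is convex
for every symmetric `ε` and all `a, b ∈ ℝ³`. -/
def SymRankOneConvex3 (f : Matrix (Fin 3) (Fin 3) ℝ → ℝ) : Prop :=
  ∀ ε : Matrix (Fin 3) (Fin 3) ℝ, ε.IsSymm → ∀ a b : Fin 3 → ℝ,
    ConvexOn ℝ Set.univ (fun t : ℝ => f (ε + t • symProd a b))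

noncomputable def wv (F : Matrix (Fin 3) (Fin 3) ℝ) : Fin 3 → ℝ :=
  ![(F 2 1 - F 1 2)/2, (F 0 2 - F 2 0)/2, (F 1 0 - F 0 1)/2]

def cross3 (a b : Fin 3 → ℝ) : Fin 3 → ℝ :=
  ![a 1 * b 2 - a 2 * b 1, a 2 * b 0 - a 0 * b 2, a 0 * b 1 - a 1 * b 0]

lemma sa00 : (0:Fin 3).succAbove (0:Fin 2) = 1 := by decide
lemma sa01 : (0:Fin 3).succAbove (1:Fin 2) = 2 := by decide
lemma sa10 : (1:Fin 3).succAbove (0:Fin 2) = 0 := by decide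
lemma sa11 : (1:Fin 3).succAbove (1:Fin 2) = 2 := by decide
lemma sa20 : (2:Fin 3).succAbove (0:Fin 2) = 0 := by decide
lemma sa21 : (2:Fin 3).succAbove (1:Fin 2) = 1 := by decide

-- L1: quadratic expansion of t ↦ mdot A (cof (X + t • N))
lemma mdot_cof_expand (A X N : Matrix (Fin 3) (Fin 3) ℝ) (t : ℝ) :
    mdot A (cof (X + t • N)) = mdot A (cof X)
      + t * (mdot A (cof (X + N)) - mdot A (cof X) - mdot A (cof N))
      + t^2 * mdot A (cof N) := by
  simp only [mdot, cof, Matrix.of_apply, Fin.sum_univ_three, Matrix.det_fin_two,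
    Matrix.submatrix_apply, Matrix.add_apply, Matrix.smul_apply, smul_eq_mul,
    sa00, sa01, sa10, sa11, sa20, sa21]
  norm_num
  ring

-- L2: cof affine along rank-one lines
lemma cof_rankone (X : Matrix (Fin 3) (Fin 3) ℝ) (a b : Fin 3 → ℝ) (t : ℝ) :
    cof (X + t • vecMulVec a b) = cof X + t • (cof (X + vecMulVec a b) - cof X) := by
  ext i j
  fin_cases i <;> fin_cases j <;>
  · simp only [cof, Matrix.of_apply, Matrix.det_fin_two, Matrix.submatrix_apply,
      Matrix.add_apply, Matrix.sub_apply, Matrix.smul_apply, smul_eq_mul, vecMulVec_apply,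
      sa00, sa01, sa10, sa11, sa20, sa21]
    norm_num
    ring

-- L3: det affine along rank-one lines
lemma det_rankone (X : Matrix (Fin 3) (Fin 3) ℝ) (a b : Fin 3 → ℝ) (t : ℝ) :
    (X + t • vecMulVec a b).det = X.det + t * ((X + vecMulVec a b).det - X.det) := by
  simp only [Matrix.det_fin_three, Matrix.add_apply, Matrix.smul_apply, smul_eq_mul,
    vecMulVec_apply]
  ring

-- L4: symPart of a rank-one perturbation of a symmetric matrix
lemma symPart_line (ε : Matrix (Fin 3) (Fin 3) ℝ) (hε : ε.IsSymm) (a b : Fin 3 → ℝ) (t : ℝ) :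
    symPart (ε + t • vecMulVec a b) = ε + t • symProd a b := by
  have e : ∀ i j : Fin 3, ε j i = ε i j := fun i j => congrFun (congrFun hε i) j
  ext i j
  simp only [symPart, symProd, Matrix.smul_apply, Matrix.add_apply, Matrix.transpose_apply,
    vecMulVec_apply, smul_eq_mul, e]
  ring

-- L5: representation identity (needs A symmetric)
lemma rep_identity (A : Matrix (Fin 3) (Fin 3) ℝ) (hA : A.IsSymm)
    (F : Matrix (Fin 3) (Fin 3) ℝ) :
    -mdot A (cof (symPart F)) = -mdot A (cof F) + A.mulVec (wv F) ⬝ᵥ wv F := by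
  have e : ∀ i j : Fin 3, A j i = A i j := fun i j => congrFun (congrFun hA i) j
  simp only [mdot, cof, wv, Matrix.of_apply, Fin.sum_univ_three, Matrix.det_fin_two,
    Matrix.submatrix_apply, symPart, Matrix.add_apply, Matrix.smul_apply, smul_eq_mul,
    Matrix.transpose_apply, mulVec, dotProduct,
    sa00, sa01, sa10, sa11, sa20, sa21,
    Matrix.cons_val_zero, Matrix.cons_val_one, Matrix.head_cons, Matrix.cons_val_two,
    Matrix.tail_cons, e 0 1, e 0 2, e 1 2]
  norm_num [e 0 1, e 0 2, e 1 2]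
  ring

-- L7: convex quadratic has nonneg leading coefficient
lemma quad_coeff_nonneg {g : ℝ → ℝ} (hg : ConvexOn ℝ Set.univ g)
    (c2 c1 c0 : ℝ) (hform : ∀ t, g t = c2*t^2 + c1*t + c0) : 0 ≤ c2 := by
  have h := hg.2 (Set.mem_univ (-1 : ℝ)) (Set.mem_univ (1 : ℝ))
    (by norm_num : (0:ℝ) ≤ 1/2) (by norm_num : (0:ℝ) ≤ 1/2) (by norm_num)
  simp only [smul_eq_mul] at h
  rw [show (1/2 : ℝ) * (-1) + 1/2 * 1 = 0 by norm_num] at h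
  rw [hform, hform, hform] at h
  nlinarith [h]

-- L8: cof of symProd in terms of cross product
lemma mdot_cof_symProd (A : Matrix (Fin 3) (Fin 3) ℝ) (a b : Fin 3 → ℝ) :
    -mdot A (cof (symProd a b)) = (1/4) * (A.mulVec (cross3 a b) ⬝ᵥ cross3 a b) := by
  simp only [mdot, cof, cross3, symProd, Matrix.of_apply, Fin.sum_univ_three,
    Matrix.det_fin_two, Matrix.submatrix_apply, Matrix.add_apply, Matrix.smul_apply,
    smul_eq_mul, vecMulVec_apply, mulVec, dotProduct,
    sa00, sa01, sa10, sa11, sa20, sa21,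
    Matrix.cons_val_zero, Matrix.cons_val_one, Matrix.head_cons, Matrix.cons_val_two,
    Matrix.tail_cons]
  norm_num
  ring

lemma cross_magic (u x : Fin 3 → ℝ) (i : Fin 3) :
    cross3 (cross3 u x) (cross3 x (cross3 u x)) i
      = (cross3 u x ⬝ᵥ cross3 u x) * x i := by
  fin_cases i <;>
  · simp [cross3, dotProduct, Fin.sum_univ_three]
    ring

lemma qform_smul (A : Matrix (Fin 3) (Fin 3) ℝ) (k : ℝ) (x : Fin 3 → ℝ) :
    A.mulVec (fun i => k * x i) ⬝ᵥ (fun i => k * x i) = k^2 * (A.mulVec x ⬝ᵥ x) := by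
  simp only [mulVec, dotProduct, Fin.sum_univ_three]
  ring

-- (ii) ⇒ (iii)
lemma h23 (A : Matrix (Fin 3) (Fin 3) ℝ)
    (h : SymRankOneConvex3 (fun ε => -mdot A (cof ε))) : PosSemidefM A := by
  have key : ∀ a b : Fin 3 → ℝ, 0 ≤ -mdot A (cof (symProd a b)) := by
    intro a b
    have hc := h 0 (by simp [Matrix.IsSymm]) a b
    exact quad_coeff_nonneg hc _
      (-(mdot A (cof (0 + symProd a b)) - mdot A (cof 0) - mdot A (cof (symProd a b))))
      (-(mdot A (cof 0)))
      (fun t => by show -mdot A (cof (0 + t • symProd a b)) = _; rw [mdot_cof_expand]; ring)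
  have hQ : ∀ a b : Fin 3 → ℝ, 0 ≤ A.mulVec (cross3 a b) ⬝ᵥ cross3 a b := by
    intro a b
    have h1 := key a b
    rw [mdot_cof_symProd] at h1
    linarith
  have haux : ∀ u x : Fin 3 → ℝ, 0 < cross3 u x ⬝ᵥ cross3 u x → 0 ≤ A.mulVec x ⬝ᵥ x := by
    intro u x hk
    set a := cross3 u x with ha
    have h1 := hQ a (cross3 x a)
    have h2 : cross3 a (cross3 x a) = fun i => (a ⬝ᵥ a) * x i :=
      funext (fun i => cross_magic u x i)
    rw [h2, qform_smul] at h1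
    nlinarith [h1, mul_pos hk hk]
  intro x
  by_cases h0 : x 0 = 0
  · by_cases h1 : x 1 = 0
    · by_cases h2 : x 2 = 0
      · have : A.mulVec x ⬝ᵥ x = 0 := by
          simp [mulVec, dotProduct, Fin.sum_univ_three, h0, h1, h2]
        linarith
      · refine haux ![0,1,0] x ?_
        simp only [cross3, dotProduct, Fin.sum_univ_three, Matrix.cons_val_zero,
          Matrix.cons_val_one, Matrix.head_cons, Matrix.cons_val_two, Matrix.tail_cons]
        nlinarith [mul_self_pos.mpr h2, sq_nonneg (x 0)]
    · refine haux ![1,0,0] x ?_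
      simp only [cross3, dotProduct, Fin.sum_univ_three, Matrix.cons_val_zero,
        Matrix.cons_val_one, Matrix.head_cons, Matrix.cons_val_two, Matrix.tail_cons]
      nlinarith [mul_self_pos.mpr h1, sq_nonneg (x 2)]
  · refine haux ![0,1,0] x ?_
    simp only [cross3, dotProduct, Fin.sum_univ_three, Matrix.cons_val_zero,
      Matrix.cons_val_one, Matrix.head_cons, Matrix.cons_val_two, Matrix.tail_cons]
    nlinarith [mul_self_pos.mpr h0, sq_nonneg (x 2)]

lemma h12 (A : Matrix (Fin 3) (Fin 3) ℝ)
    (h : SymPolyconvex3 (fun ε => -mdot A (cof ε))) :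
    SymRankOneConvex3 (fun ε => -mdot A (cof ε)) := by
  obtain ⟨G, hG, hrep⟩ := h
  intro ε hε a b
  set R := vecMulVec a b with hR
  set p : Matrix (Fin 3) (Fin 3) ℝ × Matrix (Fin 3) (Fin 3) ℝ × ℝ := (ε, cof ε, ε.det) with hp
  set q : Matrix (Fin 3) (Fin 3) ℝ × Matrix (Fin 3) (Fin 3) ℝ × ℝ :=
    (ε + R, cof (ε + R), (ε + R).det) with hq
  have haff := hG.comp_affineMap (AffineMap.lineMap (k := ℝ) p q)
  rw [Set.preimage_univ] at haff
  have hfun : (fun t : ℝ => -mdot A (cof (ε + t • symProd a b)))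
      = G ∘ (AffineMap.lineMap (k := ℝ) p q) := by
    funext t
    have h4 : ε + t • symProd a b = symPart (ε + t • R) := (symPart_line ε hε a b t).symm
    have h5 : -mdot A (cof (symPart (ε + t • R)))
        = G (ε + t • R, cof (ε + t • R), (ε + t • R).det) := hrep (ε + t • R)
    have h6 : (AffineMap.lineMap (k := ℝ) p q) t
        = (ε + t • R, cof (ε + t • R), (ε + t • R).det) := by
      have c1 : (1 - t) • ε + t • (ε + R) = ε + t • R := by module
      have c2 : (1 - t) • cof ε + t • cof (ε + R) = cof (ε + t • R) := by
        rw [cof_rankone]; module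
      have c3 : (1 - t) • ε.det + t • (ε + R).det = (ε + t • R).det := by
        rw [det_rankone]; simp only [smul_eq_mul]; ring
      rw [AffineMap.lineMap_apply_module, hp, hq]
      rw [Prod.smul_mk, Prod.smul_mk, Prod.mk_add_mk, Prod.smul_mk, Prod.smul_mk,
        Prod.mk_add_mk]
      rw [c1, c2, c3]
    show -mdot A (cof (ε + t • symProd a b)) = G ((AffineMap.lineMap (k := ℝ) p q) t)
    rw [h4, h6]
    exact h5
  rw [hfun]
  exact haff
lemma h31 (A : Matrix (Fin 3) (Fin 3) ℝ) (hA : A.IsSymm) (hpsd : PosSemidefM A) :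
    SymPolyconvex3 (fun ε => -mdot A (cof ε)) := by
  have hconv : ConvexOn ℝ Set.univ
      (fun P : Matrix (Fin 3) (Fin 3) ℝ × Matrix (Fin 3) (Fin 3) ℝ × ℝ =>
        -mdot A P.2.1 + A.mulVec (wv P.1) ⬝ᵥ wv P.1) := by
    refine ⟨convex_univ, ?_⟩
    intro P _ Q _ a b ha hb hab
    have hb' : b = 1 - a := by linarith
    subst hb'
    have hd := hpsd (fun i => wv P.1 i - wv Q.1 i)
    have key : 0 ≤ a * (1 - a) * (A.mulVec (fun i => wv P.1 i - wv Q.1 i) ⬝ᵥ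
        (fun i => wv P.1 i - wv Q.1 i)) := mul_nonneg (mul_nonneg ha hb) hd
    simp only [smul_eq_mul, Prod.fst_add, Prod.snd_add, Prod.smul_fst, Prod.smul_snd,
      mdot, wv, mulVec, dotProduct, Fin.sum_univ_three, Matrix.add_apply, Matrix.smul_apply,
      smul_eq_mul, Matrix.cons_val_zero, Matrix.cons_val_one, Matrix.head_cons,
      Matrix.cons_val_two, Matrix.tail_cons] at key ⊢
    linarith [key]
  exact ⟨_, hconv, fun F => rep_identity A hA F⟩

/-- For `A ∈ S^{3×3}` and `f(ε) = −A : cof ε`, symmetric polyconvexity, symmetric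
rank-one convexity, and positive semi-definiteness of `A` are equivalent. -/
theorem neg_cof_form_equivalences (A : Matrix (Fin 3) (Fin 3) ℝ) (hA : A.IsSymm) :
    (SymPolyconvex3 (fun ε => -mdot A (cof ε)) ↔
      SymRankOneConvex3 (fun ε => -mdot A (cof ε))) ∧
    (SymRankOneConvex3 (fun ε => -mdot A (cof ε)) ↔ PosSemidefM A) := by
  exact ⟨⟨h12 A, fun h2 => h31 A hA (h23 A h2)⟩, ⟨h23 A, fun h3 => h12 A (h31 A hA h3)⟩⟩
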